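/- For every finite game graph G with n players and |V| positions, there exists a nondeterministic finite automaton over alphabet V with at most 2n²|V|² states such that, for every word π ∈ V* that is a history of G, the automaton accepts π if and only if the history π does not yield hierarchical information. -/

import Mathlib

/-- A finite game graph for `n` players: positions `V` with initial position `init`,
action sets `A i`, observation sets `B i`, a move relation labelled by action
profiles (with no dead ends), and observation functions. -/
structure GameGraph (n : ℕ) (V : Type) (A : Fin n → Type) (B : Fin n → Type) where
  init : V
  move : V → (∀ i, A i) → V → Prop
  noDeadEnd : ∀ v a, ∃ w, move v a w
  obs : ∀ i : Fin n, V → B i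

/-- A Moore machine with finite state set `Q`, input alphabet `σ`, output alphabet `γ`. -/
structure Moore (σ γ : Type) where
  Q : Type
  finQ : Fintype Q
  q0 : Q
  δ : Q → σ → Q
  out : Q → γ

namespace Moore

/-- The output letter of a Moore machine after reading a word. -/
def output {σ γ : Type} (mc : Moore σ γ) (w : List σ) : γ :=
  mc.out (w.foldl mc.δ mc.q0)

/-- The output word of a Moore machine along a word: the `k`-th letter is the
output after reading the prefix of length `k+1`. -/
def outWord {σ γ : Type} (mc : Moore σ γ) (w : List σ) : List γ :=
  ((w.scanl mc.δ mc.q0).drop 1).map mc.out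

end Moore

/-- A deterministic parity automaton over alphabet `α`. -/
structure ParityAut (α : Type) where
  Q : Type
  finQ : Fintype Q
  q0 : Q
  δ : Q → α → Q
  prio : Q → ℕ

namespace ParityAut

/-- The run of a deterministic parity automaton on an infinite word. -/
def run {α : Type} (d : ParityAut α) (f : ℕ → α) : ℕ → d.Q
  | 0 => d.q0
  | t + 1 => d.δ (run d f t) (f t)

/-- Parity acceptance: the least priority occurring infinitely often is even. -/
def Accepts {α : Type} (d : ParityAut α) (f : ℕ → α) : Prop :=
  Even (sInf { p | ∃ᶠ t in Filter.atTop, d.prio (d.run f t) = p })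

end ParityAut

/-- A deterministic Büchi automaton over alphabet `α` with state set `σ`. -/
structure DetBuchi (α σ : Type) where
  q0 : σ
  δ : σ → α → σ
  accept : Set σ

namespace DetBuchi

/-- The run of a deterministic Büchi automaton on an infinite word. -/
def run {α σ : Type} (d : DetBuchi α σ) (f : ℕ → α) : ℕ → σ
  | 0 => d.q0
  | t + 1 => d.δ (run d f t) (f t)

/-- Büchi acceptance: the run visits accepting states infinitely often. -/
def Accepts {α σ : Type} (d : DetBuchi α σ) (f : ℕ → α) : Prop :=
  ∃ᶠ t in Filter.atTop, d.run f t ∈ d.accept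

end DetBuchi

namespace GameGraph

variable {n : ℕ} {V : Type} {A B : Fin n → Type}

/-- Two positions are linked by a move (for some action profile). -/
def step (G : GameGraph n V A B) (u w : V) : Prop := ∃ a, G.move u a w

/-- A history: a nonempty sequence starting at the initial position, each
consecutive pair lying on a move. -/
def IsHistory (G : GameGraph n V A B) (π : List V) : Prop :=
  π.head? = some G.init ∧ π.Chain' G.step

/-- The observation sequence of player `i` along a history (the observation at
the initial position is discarded). -/
def obsSeq (G : GameGraph n V A B) (i : Fin n) (π : List V) : List (B i) :=
  (π.drop 1).map (G.obs i)

/-- Histories are indistinguishable for player `i` if they yield the same observations. -/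
def Indist (G : GameGraph n V A B) (i : Fin n) (π π' : List V) : Prop :=
  G.obsSeq i π = G.obsSeq i π'

/-- The information set of player `i` at history `π`. -/
def InfoSet (G : GameGraph n V A B) (i : Fin n) (π : List V) : Set (List V) :=
  { π' | G.IsHistory π' ∧ G.Indist i π π' }

/-- A history yields hierarchical information if the information sets of players
are totally ordered by inclusion. -/
def HistHI (G : GameGraph n V A B) (π : List V) : Prop :=
  ∀ i j : Fin n, G.InfoSet i π ⊆ G.InfoSet j π ∨ G.InfoSet j π ⊆ G.InfoSet i π

/-- Static hierarchical information: there is a total order of the players such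
that along every history, the information sets respect this order. -/
def StaticHI (G : GameGraph n V A B) : Prop :=
  ∃ ord : Fin n → Fin n → Prop, IsLinearOrder (Fin n) ord ∧
    ∀ i j : Fin n, ord i j → ∀ π, G.IsHistory π → G.InfoSet i π ⊆ G.InfoSet j π

/-- Hierarchical observation: there is a total order of the players such that
the observation of a smaller player determines that of a bigger player, positionally. -/
def HierObs (G : GameGraph n V A B) : Prop :=
  ∃ ord : Fin n → Fin n → Prop, IsLinearOrder (Fin n) ord ∧
    ∀ i j : Fin n, ord i j → ∀ v v' : V, G.obs i v = G.obs i v' → G.obs j v = G.obs j v'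

/-- Dynamic hierarchical information: every history yields hierarchical information. -/
def DynamicHI (G : GameGraph n V A B) : Prop := ∀ π, G.IsHistory π → G.HistHI π

/-- The prefix `v₀ … v_t` of a play, as a list. -/
def playPrefix (f : ℕ → V) (t : ℕ) : List V := (List.range (t + 1)).map f

/-- A play: an infinite sequence all of whose prefixes are histories. -/
def IsPlay (G : GameGraph n V A B) (f : ℕ → V) : Prop :=
  ∀ t, G.IsHistory (playPrefix f t)

/-- A play yields recurring hierarchical information if infinitely many of its
prefix histories yield hierarchical information. -/
def PlayRecurringHI (G : GameGraph n V A B) (f : ℕ → V) : Prop :=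
  ∀ T, ∃ t, T ≤ t ∧ G.HistHI (playPrefix f t)

/-- A game yields recurring hierarchical information if every play does. -/
def RecurringHI (G : GameGraph n V A B) : Prop :=
  ∀ f, G.IsPlay f → G.PlayRecurringHI f

/-- `[t, t+ℓ]` is a gap of the play `f`: no prefix of length `r ∈ [t, t+ℓ]` yields
hierarchical information.  The length of this gap is `ℓ + 1`. -/
def IsGap (G : GameGraph n V A B) (f : ℕ → V) (t ℓ : ℕ) : Prop :=
  ∀ r, t ≤ r → r ≤ t + ℓ → ¬ G.HistHI (playPrefix f r)

/-- Information-consistency of a strategy profile: each component is constant on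
indistinguishability classes of histories. -/
def Consistent (G : GameGraph n V A B) (s : ∀ i, List V → A i) : Prop :=
  ∀ (i : Fin n) (π π' : List V),
    G.IsHistory π → G.IsHistory π' → G.Indist i π π' → s i π = s i π'

/-- A play follows a strategy profile. -/
def Follows (G : GameGraph n V A B) (s : ∀ i, List V → A i) (f : ℕ → V) : Prop :=
  f 0 = G.init ∧ ∀ t, ∃ a, G.move (f t) a (f (t + 1)) ∧ ∀ i, a i = s i (playPrefix f t)

/-- A distributed winning strategy for winning condition `W`: an information-consistent
profile all of whose outcomes lie in `W`. -/
def WinningProfile (G : GameGraph n V A B) (W : Set (ℕ → V)) (s : ∀ i, List V → A i) : Prop :=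
  G.Consistent s ∧ ∀ f, G.Follows s f → f ∈ W

/-- A finite-state strategy for player `i`: implemented by a Moore machine reading
the observation sequence of the history. -/
def FinStateStrategy (G : GameGraph n V A B) (i : Fin n) (si : List V → A i) : Prop :=
  ∃ mc : Moore (B i) (A i), ∀ π, G.IsHistory π → si π = mc.output (G.obsSeq i π)

/-- The game admits a distributed winning strategy for `W`. -/
def HasDWS (G : GameGraph n V A B) (W : Set (ℕ → V)) : Prop :=
  ∃ s : ∀ i, List V → A i, G.WinningProfile W s

/-- The game admits a finite-state distributed winning strategy for `W`. -/
def HasFinDWS (G : GameGraph n V A B) (W : Set (ℕ → V)) : Prop :=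
  ∃ s : ∀ i, List V → A i, G.WinningProfile W s ∧ ∀ i, G.FinStateStrategy i (s i)

/-- `i ⪯_π j` : at history `π`, player `i` is at least as informed as player `j`. -/
def infoLE (G : GameGraph n V A B) (π : List V) (i j : Fin n) : Prop :=
  G.InfoSet i π ⊆ G.InfoSet j π

/-- The information rank of player `i` at history `π`: the number of players `j`
with `j ≺_π i`, or with `j < i` and `j ≈_π i`. -/
noncomputable def rank (G : GameGraph n V A B) (i : Fin n) (π : List V) : ℕ :=
  Nat.card {j : Fin n //
    (G.infoLE π j i ∧ ¬ G.infoLE π i j) ∨ (j < i ∧ G.infoLE π j i ∧ G.infoLE π i j)}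

/-- The signal `λ_j^i`: the set of observations of player `i` at the last positions of
histories in the information set of player `j`. -/
def lam (G : GameGraph n V A B) (i j : Fin n) (π : List V) : Set (B i) :=
  { b | ∃ π', π' ∈ G.InfoSet j π ∧ ∃ v, π'.getLast? = some v ∧ G.obs i v = b }

/-- Players `i` and `j` cross at stage `ℓ` of the play `f`. -/
def Crossing (G : GameGraph n V A B) (f : ℕ → V) (ℓ : ℕ) (i j : Fin n) : Prop :=
  G.InfoSet i (playPrefix f ℓ) ⊂ G.InfoSet j (playPrefix f ℓ) ∧
  G.InfoSet j (playPrefix f (ℓ + 1)) ⊂ G.InfoSet i (playPrefix f (ℓ + 1))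

/-- A game is cross-free if no two players cross at any stage of any play. -/
def CrossFree (G : GameGraph n V A B) : Prop :=
  ∀ f, G.IsPlay f → ∀ (ℓ : ℕ) (i j : Fin n), ¬ G.Crossing f ℓ i j

end GameGraph

/-! A history `π` fails to yield hierarchical information iff there are players `i < j` and
histories `π₁ ∼ᵢ π` with `π₁ ≁ⱼ π` and `π₂ ∼ⱼ π` with `π₂ ≁ᵢ π`. An automaton reading `π` can
guess `i < j` and build `π₁` and `π₂` position by position alongside `π`, remembering only their
current positions and whether `j` (resp. `i`) has already observed a difference. Together with a
fresh initial state this needs `(n choose 2) · (2|V|)² + 1 ≤ 2n²|V|²` states. -/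

namespace NFA

variable {α σ τ : Type*}

@[simps]
def reindex (g : σ ≃ τ) (M : NFA α σ) : NFA α τ where
  step t a := g.symm ⁻¹' M.step (g.symm t) a
  start := g.symm ⁻¹' M.start
  accept := g.symm ⁻¹' M.accept

theorem stepSet_reindex (g : σ ≃ τ) (M : NFA α σ) (S : Set σ) (a : α) :
    (M.reindex g).stepSet (g.symm ⁻¹' S) a = g.symm ⁻¹' M.stepSet S a := by
  ext t
  simp only [Set.mem_preimage, mem_stepSet, reindex, g.symm.surjective.exists]

theorem evalFrom_reindex (g : σ ≃ τ) (M : NFA α σ) (S : Set σ) (x : List α) :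
    (M.reindex g).evalFrom (g.symm ⁻¹' S) x = g.symm ⁻¹' M.evalFrom S x := by
  induction x generalizing S with
  | nil => rfl
  | cons a x ih => rw [evalFrom_cons, stepSet_reindex, ih, evalFrom_cons]

theorem accepts_reindex (g : σ ≃ τ) (M : NFA α σ) : (M.reindex g).accepts = M.accepts := by
  ext x
  simp only [mem_accepts, reindex_start, reindex_accept, evalFrom_reindex, Set.mem_preimage]
  exact (g.symm.surjective.exists (p := fun s => s ∈ M.accept ∧ s ∈ M.evalFrom M.start x)).symm

end NFA

theorem not_total_iff_exists_lt {α : Type*} [LinearOrder α] {r : α → α → Prop}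
    (hr : ∀ a, r a a) : (¬ ∀ a b, r a b ∨ r b a) ↔ ∃ a b, a < b ∧ ¬ r a b ∧ ¬ r b a := by
  simp only [not_forall, not_or]
  constructor
  · rintro ⟨a, b, hab, hba⟩
    rcases lt_trichotomy a b with h | rfl | h
    exacts [⟨a, b, h, hab, hba⟩, (hab (hr a)).elim, ⟨b, a, h, hba, hab⟩]
  · rintro ⟨a, b, -, h⟩
    exact ⟨a, b, h⟩

namespace GameGraph

variable {n : ℕ} {V : Type} {A B : Fin n → Type} (G : GameGraph n V A B)

theorem isHistory_iff {π : List V} :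
    G.IsHistory π ↔ π.head? = some G.init ∧ π.IsChain G.step :=
  Iff.rfl

theorem IsHistory.ne_nil {G : GameGraph n V A B} {π : List V} (h : G.IsHistory π) : π ≠ [] := by
  rintro rfl
  simp [IsHistory] at h

theorem isHistory_singleton {v : V} : G.IsHistory [v] ↔ v = G.init := by
  simp [isHistory_iff]

theorem isHistory_append_singleton {σ : List V} (hσ : σ ≠ []) (v : V) :
    G.IsHistory (σ ++ [v]) ↔ G.IsHistory σ ∧ G.step (σ.getLast hσ) v := by
  simp [isHistory_iff, List.isChain_append, List.head?_append_of_ne_nil _ hσ,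
    List.getLast?_eq_some_getLast hσ, and_assoc]

theorem length_obsSeq (i : Fin n) (π : List V) : (G.obsSeq i π).length = π.length - 1 := by
  simp [obsSeq]

theorem obsSeq_append_singleton (i : Fin n) {σ : List V} (hσ : σ ≠ []) (v : V) :
    G.obsSeq i (σ ++ [v]) = G.obsSeq i σ ++ [G.obs i v] := by
  simp [obsSeq, List.drop_append_of_le_length (List.length_pos_iff.2 hσ)]

theorem indist_append_singleton {i : Fin n} {σ σ₁ : List V} (hσ : σ ≠ []) (hσ₁ : σ₁ ≠ [])
    (v u : V) : G.Indist i (σ ++ [v]) (σ₁ ++ [u]) ↔ G.Indist i σ σ₁ ∧ G.obs i v = G.obs i u := by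
  rw [Indist, obsSeq_append_singleton G i hσ, obsSeq_append_singleton G i hσ₁,
    List.append_singleton_inj, Indist]

theorem IsHistory.indist_singleton_iff {G : GameGraph n V A B} {i : Fin n} {π : List V}
    (h : G.IsHistory π) (v : V) :
    G.Indist i [v] π ↔ π = [G.init] := by
  obtain ⟨w, rest, rfl⟩ := List.exists_cons_of_ne_nil h.ne_nil
  obtain rfl : w = G.init := by simpa [isHistory_iff] using h.1
  simp [Indist, obsSeq]

/-- `(u, b)` is a possible tracker state for the pair `(i, j)` after reading `π`: `u` is the
last position of a history that player `i` cannot tell apart from `π`, and `b` says whether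
player `j` can. -/
def Tracks (i j : Fin n) (π : List V) (s : V × Bool) : Prop :=
  ∃ π₁, G.IsHistory π₁ ∧ G.Indist i π π₁ ∧ π₁.getLast? = some s.1 ∧
    (s.2 = true ↔ ¬ G.Indist j π π₁)

def TrackStep (i j : Fin n) (v : V) (s t : V × Bool) : Prop :=
  G.step s.1 t.1 ∧ G.obs i t.1 = G.obs i v ∧ (t.2 = true ↔ s.2 = true ∨ G.obs j t.1 ≠ G.obs j v)

theorem tracks_singleton {i j : Fin n} {v : V} {s : V × Bool} :
    G.Tracks i j [v] s ↔ s = (G.init, false) := by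
  constructor
  · rintro ⟨π₁, hist, hi, hlast, hflag⟩
    obtain rfl := (hist.indist_singleton_iff v).1 hi
    simp only [Indist, obsSeq, List.getLast?_singleton, Option.some_inj] at hlast hflag
    exact Prod.ext hlast.symm (by simpa using hflag)
  · rintro rfl
    exact ⟨[G.init], (isHistory_singleton G).2 rfl, rfl, rfl, by simp [Indist, obsSeq]⟩

theorem tracks_append_singleton {i j : Fin n} {σ : List V} (hσ : σ ≠ []) {v : V}
    {t : V × Bool} : G.Tracks i j (σ ++ [v]) t ↔ ∃ s, G.Tracks i j σ s ∧ G.TrackStep i j v s t := by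
  classical
  constructor
  · rintro ⟨π₁, hist, hi, hlast, hflag⟩
    obtain ⟨σ₁, u, rfl, hσ₁⟩ : ∃ σ₁ u, π₁ = σ₁ ++ [u] ∧ σ₁ ≠ [] := by
      obtain rfl | ⟨σ₁, u, rfl⟩ := List.eq_nil_or_concat' π₁
      · exact absurd rfl hist.ne_nil
      refine ⟨σ₁, u, rfl, ?_⟩
      rintro rfl
      exact hσ (by simpa [length_obsSeq] using congrArg List.length hi)
    rw [isHistory_append_singleton G hσ₁] at hist
    rw [indist_append_singleton G hσ hσ₁] at hi hflag
    obtain rfl : u = t.1 := by simpa using hlast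
    refine ⟨(σ₁.getLast hσ₁, decide ¬ G.Indist j σ σ₁),
      ⟨σ₁, hist.1, hi.1, List.getLast?_eq_some_getLast hσ₁, by simp⟩, hist.2, hi.2.symm, ?_⟩
    rw [hflag]
    simp only [decide_eq_true_eq]
    tauto
  · rintro ⟨⟨w, b⟩, ⟨σ₁, hist, hi, hlast, hflag⟩, hstep, hobs, hnew⟩
    have hσ₁ := hist.ne_nil
    rw [List.getLast?_eq_some_getLast hσ₁, Option.some_inj] at hlast
    subst hlast
    refine ⟨σ₁ ++ [t.1], (isHistory_append_singleton G hσ₁ _).2 ⟨hist, hstep⟩,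
      (indist_append_singleton G hσ hσ₁ _ _).2 ⟨hi, hobs.symm⟩, List.getLast?_concat, ?_⟩
    rw [hnew, hflag, indist_append_singleton G hσ hσ₁]
    tauto

theorem exists_tracks_true_iff {i j : Fin n} {π : List V} :
    (∃ u, G.Tracks i j π (u, true)) ↔ ¬ G.InfoSet i π ⊆ G.InfoSet j π := by
  rw [Set.not_subset]
  constructor
  · rintro ⟨u, π₁, hist, hi, -, hflag⟩
    exact ⟨π₁, ⟨hist, hi⟩, fun hj => hflag.1 rfl hj.2⟩
  · rintro ⟨π₁, ⟨hist, hi⟩, hj⟩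
    exact ⟨π₁.getLast hist.ne_nil, π₁, hist, hi, List.getLast?_eq_some_getLast _,
      iff_of_true rfl fun hj' => hj ⟨hist, hj'⟩⟩

variable (n V) in
abbrev PairState := {p : Fin n × Fin n // p.1 < p.2} × (V × Bool) × (V × Bool)

def nonHIAutomaton : NFA V (Option (PairState n V)) where
  step
    -- the only history of length one is `[G.init]`, and `obsSeq` ignores its observation
    | none, _ => Set.range fun p => some (p, (G.init, false), (G.init, false))
    | some (p, s₁, s₂), v => {q | ∃ t₁ t₂, q = some (p, t₁, t₂) ∧
        G.TrackStep p.1.1 p.1.2 v s₁ t₁ ∧ G.TrackStep p.1.2 p.1.1 v s₂ t₂}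
  start := {none}
  accept := Set.range fun x : {p : Fin n × Fin n // p.1 < p.2} × V × V =>
    some (x.1, (x.2.1, true), (x.2.2, true))

def PairTracks (π : List V) (s : PairState n V) : Prop :=
  G.Tracks s.1.1.1 s.1.1.2 π s.2.1 ∧ G.Tracks s.1.1.2 s.1.1.1 π s.2.2

theorem mem_eval_nonHIAutomaton {π : List V} (hπ : π ≠ []) (q : Option (PairState n V)) :
    q ∈ G.nonHIAutomaton.eval π ↔ ∃ s, q = some s ∧ G.PairTracks π s := by
  induction π using List.reverseRecOn generalizing q with
  | nil => exact absurd rfl hπ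
  | append_singleton σ v ih =>
    rw [NFA.eval_append_singleton, NFA.mem_stepSet]
    rcases eq_or_ne σ [] with rfl | hσ
    · simp [nonHIAutomaton, PairTracks, tracks_singleton, eq_comm]
    simp only [ih hσ, PairTracks, tracks_append_singleton G hσ]
    constructor
    · rintro ⟨_, ⟨⟨p, s₁, s₂⟩, rfl, h₁, h₂⟩, t₁, t₂, rfl, ht₁, ht₂⟩
      exact ⟨(p, t₁, t₂), rfl, ⟨s₁, h₁, ht₁⟩, ⟨s₂, h₂, ht₂⟩⟩
    · rintro ⟨⟨p, t₁, t₂⟩, rfl, ⟨s₁, h₁, ht₁⟩, ⟨s₂, h₂, ht₂⟩⟩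
      exact ⟨some (p, s₁, s₂), ⟨(p, s₁, s₂), rfl, h₁, h₂⟩, t₁, t₂, rfl, ht₁, ht₂⟩

theorem mem_accepts_nonHIAutomaton {π : List V} (hπ : π ≠ []) :
    π ∈ G.nonHIAutomaton.accepts ↔
      ∃ i j, i < j ∧ ¬ G.InfoSet i π ⊆ G.InfoSet j π ∧ ¬ G.InfoSet j π ⊆ G.InfoSet i π := by
  simp only [← exists_tracks_true_iff]
  constructor
  · rintro ⟨_, ⟨⟨p, u₁, u₂⟩, rfl⟩, hq⟩
    obtain ⟨_, hs, h₁, h₂⟩ := (G.mem_eval_nonHIAutomaton hπ _).1 hq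
    obtain rfl := Option.some_inj.1 hs
    exact ⟨p.1.1, p.1.2, p.2, ⟨u₁, h₁⟩, ⟨u₂, h₂⟩⟩
  · rintro ⟨i, j, hij, ⟨u₁, h₁⟩, ⟨u₂, h₂⟩⟩
    exact ⟨_, ⟨(⟨(i, j), hij⟩, u₁, u₂), rfl⟩, (G.mem_eval_nonHIAutomaton hπ _).2 ⟨_, rfl, h₁, h₂⟩⟩

theorem card_pairState [Fintype V] :
    Fintype.card (PairState n V) = n.choose 2 * (2 * Fintype.card V) ^ 2 := by
  rw [Fintype.card_prod, Fintype.card_subtype, Fintype.card_product_filter_lt]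
  simp only [Fintype.card_prod, Fintype.card_bool, Fintype.card_fin]
  ring

theorem card_option_pairState_le [Fintype V] (hn : 0 < n) (hV : 0 < Fintype.card V) :
    Fintype.card (Option (PairState n V)) ≤ 2 * n ^ 2 * Fintype.card V ^ 2 := by
  have hpairs : 2 * n.choose 2 + n ≤ n ^ 2 := by
    have : n.choose 2 * 2 ≤ n ^ 2 - n := by
      rw [Nat.choose_two_right, sq, ← Nat.mul_sub_one]
      exact Nat.div_mul_le_self _ _
    have := Nat.le_self_pow two_ne_zero n
    omega
  have hpos : 0 < n * Fintype.card V ^ 2 := by positivity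
  rw [Fintype.card_option, card_pairState]
  nlinarith [Nat.mul_le_mul_right (2 * Fintype.card V ^ 2) hpairs]

end GameGraph

theorem statement4_general {n : ℕ} {V : Type} {A B : Fin n → Type}
    [Fintype V]
    (G : GameGraph n V A B) :
    ∃ (m : ℕ) (nfa : NFA V (Fin m)),
      m ≤ 2 * n ^ 2 * Fintype.card V ^ 2 ∧
      ∀ π : List V, G.IsHistory π → (π ∈ nfa.accepts ↔ ¬ G.HistHI π) := by
  obtain rfl | hn := Nat.eq_zero_or_pos n
  · exact ⟨0, ⟨fun _ _ => ∅, ∅, ∅⟩, Nat.zero_le _, fun π _ =>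
      iff_of_false (fun ⟨q, _⟩ => q.elim0) (not_not.2 fun i => i.elim0)⟩
  refine ⟨_, G.nonHIAutomaton.reindex (Fintype.equivFin _), ?_, fun π hπ => ?_⟩
  · exact GameGraph.card_option_pairState_le hn (Fintype.card_pos_iff.2 ⟨G.init⟩)
  · rw [NFA.accepts_reindex, G.mem_accepts_nonHIAutomaton hπ.ne_nil, GameGraph.HistHI]
    exact (not_total_iff_exists_lt (r := fun i j => G.InfoSet i π ⊆ G.InfoSet j π)
      fun _ => subset_rfl).symm

/-- For every finite game graph with `n` players and `|V|` positions there
is a nondeterministic finite automaton over alphabet `V` with at most `2n²|V|²` states that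
accepts exactly those histories that do not yield hierarchical information. -/
theorem statement4 {n : ℕ} {V : Type} {A B : Fin n → Type}
    [Fintype V] [∀ i, Fintype (A i)] [∀ i, Fintype (B i)]
    (G : GameGraph n V A B) :
    ∃ (m : ℕ) (nfa : NFA V (Fin m)),
      m ≤ 2 * n ^ 2 * Fintype.card V ^ 2 ∧
      ∀ π : List V, G.IsHistory π → (π ∈ nfa.accepts ↔ ¬ G.HistHI π) :=
  statement4_general G
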